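/- Let $S$ be a right LCM monoid with a generalised scale $N \colon S \to \mathbb{N}^\times$. If $s, t \in S$ satisfy $sS \cap tS \neq \emptyset$ and $N(s) \in N(t)\,N(S)$ (i.e., $N(t)$ divides $N(s)$ within the image of $N$), then $sS \cap tS = saS$ for some $a \in S_c$. -/

import Mathlib

/-- The principal right ideal `sS`. -/
def rIdeal {S : Type*} [Monoid S] (s : S) : Set S := {z | ∃ x, z = s * x}

/-- `S` is left cancellative. -/
def LeftCanc (S : Type*) [Monoid S] : Prop := ∀ a b c : S, a * b = a * c → b = c

/-- `s` and `t` admit a right common multiple. -/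
def Cap {S : Type*} [Monoid S] (s t : S) : Prop := (rIdeal s ∩ rIdeal t).Nonempty

/-- Any two elements with a right common multiple have a right LCM. -/
def IsRightLCM (S : Type*) [Monoid S] : Prop :=
  ∀ s t : S, Cap s t → ∃ r : S, rIdeal s ∩ rIdeal t = rIdeal r

/-- The core `S_c` of a monoid. -/
def core (S : Type*) [Monoid S] : Set S := {a | ∀ s : S, Cap a s}

/-- Core equivalence: `s ∼ t` iff `s a = t b` for some `a, b` in the core. -/
def coreEquiv {S : Type*} [Monoid S] (s t : S) : Prop :=
  ∃ a ∈ core S, ∃ b ∈ core S, s * a = t * b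

/-- The core equivalence class of `s` inside `N⁻¹(N s)`. -/
def classOf {S : Type*} [Monoid S] (N : S → ℕ) (s : S) : Set S :=
  {t | N t = N s ∧ coreEquiv s t}

/-- The set of core equivalence classes of elements of `N⁻¹(n)`. -/
def classSet {S : Type*} [Monoid S] (N : S → ℕ) (n : ℕ) : Set (Set S) :=
  {C | ∃ s, N s = n ∧ C = classOf N s}

/-- `T` is a transversal for `N⁻¹(n)/∼`. -/
def IsTransversal {S : Type*} [Monoid S] (N : S → ℕ) (n : ℕ) (T : Finset S) : Prop :=
  (∀ t ∈ T, N t = n) ∧ ∀ s : S, N s = n → ∃! t, t ∈ T ∧ coreEquiv s t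

/-- `T` is an accurate foundation set. -/
def IsAccurateFoundationSet {S : Type*} [Monoid S] (T : Finset S) : Prop :=
  (∀ s : S, ∃ f ∈ T, Cap s f) ∧ ∀ f ∈ T, ∀ f' ∈ T, f ≠ f' → ¬ Cap f f'

/-- A generalised scale on a right LCM monoid. -/
def IsGenScale {S : Type*} [Monoid S] (N : S →* ℕ) : Prop :=
  (∀ s, 0 < N s) ∧ (∃ s, N s ≠ 1) ∧
  (∀ n ∈ Set.range ⇑N, (classSet ⇑N n).ncard = n) ∧
  (∀ n ∈ Set.range ⇑N, ∀ T : Finset S, IsTransversal ⇑N n T → IsAccurateFoundationSet T)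

/-!
If `N t` divides `N s`, say `N s = N t * N u`, let `sS ∩ tS = s a' S = t b S` and pick `f` with
`N f = N u` in an accurate foundation set meeting `b`. Then `s` and `t f` have a common multiple
and the same scale, hence are core equivalent: `s a₀ = t f b₀` with `a₀, b₀` in the core. So
`s a₀ ∈ s a' S`, i.e. `a₀ = a' w`, and `a'` is in the core because the core is closed under
left factors.
-/

section RightLCM

variable {S : Type*} [Monoid S]

lemma mul_mem_rIdeal (s x : S) : s * x ∈ rIdeal s := ⟨x, rfl⟩

lemma mem_rIdeal_self (s : S) : s ∈ rIdeal s := ⟨1, (mul_one s).symm⟩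

lemma Cap.symm {s t : S} (h : Cap s t) : Cap t s := by
  rwa [Cap, Set.inter_comm]

lemma one_mem_core : (1 : S) ∈ core S :=
  fun s => ⟨s, ⟨s, (one_mul s).symm⟩, mem_rIdeal_self s⟩

lemma mul_mem_core {a b : S} (ha : a ∈ core S) (hb : b ∈ core S) : a * b ∈ core S := by
  intro x
  obtain ⟨_, ⟨p, hp⟩, ⟨q, hq⟩⟩ := ha x
  obtain ⟨_, ⟨p', hp'⟩, ⟨q', hq'⟩⟩ := hb p
  exact ⟨a * (p * q'), ⟨p', by rw [← hq', hp', mul_assoc]⟩,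
    ⟨q * q', by rw [← mul_assoc, ← hp, hq, mul_assoc]⟩⟩

lemma mem_core_of_mul_mem_core {a w : S} (h : a * w ∈ core S) : a ∈ core S := by
  intro x
  obtain ⟨z, ⟨p, hp⟩, hz⟩ := h x
  exact ⟨z, ⟨w * p, by rw [hp, mul_assoc]⟩, hz⟩

lemma mem_core_of_rIdeal_inter_eq (hlc : LeftCanc S) {a s a' : S} (ha : a ∈ core S)
    (hlcm : rIdeal a ∩ rIdeal s = rIdeal (s * a')) : a' ∈ core S := by
  intro x
  obtain ⟨z, ⟨p, hp⟩, ⟨q, hq⟩⟩ := ha (s * x)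
  have hz : z ∈ rIdeal (s * a') := hlcm ▸ ⟨⟨p, hp⟩, ⟨x * q, by rw [hq, mul_assoc]⟩⟩
  obtain ⟨m, hm⟩ := hz
  exact ⟨x * q, ⟨m, hlc s _ _ (by rw [← mul_assoc, ← hq, hm, mul_assoc])⟩, mul_mem_rIdeal x q⟩

lemma coreEquiv_equivalence (hlc : LeftCanc S) (hlcm : IsRightLCM S) :
    Equivalence (coreEquiv (S := S)) where
  refl s := ⟨1, one_mem_core, 1, one_mem_core, rfl⟩
  symm := fun ⟨a, ha, b, hb, hab⟩ => ⟨b, hb, a, ha, hab.symm⟩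
  trans := by
    rintro s t u ⟨a, ha, b, hb, hab⟩ ⟨b', hb', c, hc, hbc⟩
    obtain ⟨r, hr⟩ := hlcm b b' (hb b')
    obtain ⟨⟨d, rfl⟩, ⟨d', hd'⟩⟩ : r ∈ rIdeal b ∩ rIdeal b' := hr ▸ mem_rIdeal_self r
    have hd : d ∈ core S := mem_core_of_rIdeal_inter_eq hlc hb' (by rw [Set.inter_comm, hr])
    have hd'' : d' ∈ core S := mem_core_of_rIdeal_inter_eq hlc hb (by rw [hr, hd'])
    refine ⟨a * d, mul_mem_core ha hd, c * d', mul_mem_core hc hd'', ?_⟩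
    rw [← mul_assoc, hab, mul_assoc, hd', ← mul_assoc, hbc, mul_assoc]

lemma Cap.of_coreEquiv_left {x y f : S} (hxf : coreEquiv x f) (hxy : Cap x y) : Cap f y := by
  obtain ⟨a, ha, b, -, hab⟩ := hxf
  obtain ⟨_, ⟨p, rfl⟩, ⟨q, hq⟩⟩ := hxy
  obtain ⟨_, ⟨m, rfl⟩, ⟨m', hm'⟩⟩ := ha p
  exact ⟨f * (b * m), mul_mem_rIdeal f _,
    ⟨q * m', by rw [← mul_assoc, ← mul_assoc, ← hab, mul_assoc, hm', ← mul_assoc, hq, mul_assoc]⟩⟩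

lemma classOf_eq_of_coreEquiv (hlc : LeftCanc S) (hlcm : IsRightLCM S) (N : S → ℕ) {s t : S}
    (hN : N s = N t) (h : coreEquiv s t) : classOf N s = classOf N t := by
  have heq := coreEquiv_equivalence hlc hlcm
  ext z
  exact ⟨fun ⟨hz, hsz⟩ => ⟨hz.trans hN, heq.trans (heq.symm h) hsz⟩,
    fun ⟨hz, htz⟩ => ⟨hz.trans hN.symm, heq.trans h htz⟩⟩

lemma exists_isTransversal (hlc : LeftCanc S) (hlcm : IsRightLCM S) (N : S → ℕ) {n : ℕ}
    (hfin : (classSet N n).Finite) : ∃ T : Finset S, IsTransversal N n T := by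
  classical
  choose rep hrepN hrepC using fun (C : Set S) (hC : C ∈ classSet N n) => hC
  have hrep_equiv {s : S} (hs : N s = n) : coreEquiv s (rep _ ⟨s, hs, rfl⟩) := by
    have hs_mem : s ∈ classOf N s := ⟨rfl, (coreEquiv_equivalence hlc hlcm).refl s⟩
    rw [hrepC _ ⟨s, hs, rfl⟩] at hs_mem
    exact (coreEquiv_equivalence hlc hlcm).symm hs_mem.2
  refine ⟨hfin.toFinset.attach.image fun C => rep C.1 (hfin.mem_toFinset.mp C.2), ?_, ?_⟩
  · simp only [Finset.mem_image]
    rintro _ ⟨C, -, rfl⟩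
    exact hrepN _ _
  · intro s hs
    refine ⟨_, ⟨Finset.mem_image.mpr ⟨⟨_, hfin.mem_toFinset.mpr ⟨s, hs, rfl⟩⟩,
      Finset.mem_attach _ _, rfl⟩, hrep_equiv hs⟩, ?_⟩
    rintro _ ⟨ht, hst⟩
    obtain ⟨⟨C, hC⟩, -, rfl⟩ := Finset.mem_image.mp ht
    have hC' := hfin.mem_toFinset.mp hC
    have hCs : C = classOf N s := by
      rw [hrepC C hC', classOf_eq_of_coreEquiv hlc hlcm N (hs.trans (hrepN C hC').symm) hst]
    subst hCs
    rfl

end RightLCM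

namespace IsGenScale

variable {S : Type*} [Monoid S] {N : S →* ℕ}

lemma classSet_finite (hN : IsGenScale N) (u : S) : (classSet N (N u)).Finite :=
  Set.finite_of_ncard_pos ((hN.2.2.1 (N u) ⟨u, rfl⟩).symm ▸ hN.1 u)

lemma exists_isTransversal_isAccurateFoundationSet (hN : IsGenScale N) (hlc : LeftCanc S) (hlcm : IsRightLCM S)
    (u : S) : ∃ T : Finset S, IsTransversal N (N u) T ∧ IsAccurateFoundationSet T := by
  obtain ⟨T, hT⟩ := exists_isTransversal hlc hlcm N (hN.classSet_finite u)
  exact ⟨T, hT, hN.2.2.2 (N u) ⟨u, rfl⟩ T hT⟩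

lemma coreEquiv_of_cap (hN : IsGenScale N) (hlc : LeftCanc S) (hlcm : IsRightLCM S) {x y : S}
    (hxy : Cap x y) (hNxy : N x = N y) : coreEquiv x y := by
  have heq := coreEquiv_equivalence hlc hlcm
  obtain ⟨T, hT, hafs⟩ := hN.exists_isTransversal_isAccurateFoundationSet hlc hlcm x
  obtain ⟨f, ⟨hfT, hxf⟩, -⟩ := hT.2 x rfl
  obtain ⟨g, ⟨hgT, hyg⟩, -⟩ := hT.2 y hNxy.symm
  have hfg : Cap f g := ((hxy.of_coreEquiv_left hxf).symm.of_coreEquiv_left hyg).symm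
  have hfg' : f = g := by_contra fun hne => hafs.2 f hfT g hgT hne hfg
  exact heq.trans hxf (hfg' ▸ heq.symm hyg)

lemma exists_core_mul_mem_rIdeal (hN : IsGenScale N) (hlc : LeftCanc S) (hlcm : IsRightLCM S)
    {s t u : S} (hst : Cap s t) (hu : N s = N t * N u) : ∃ a ∈ core S, s * a ∈ rIdeal t := by
  obtain ⟨_, ⟨a', rfl⟩, ⟨b, hb⟩⟩ := hst
  obtain ⟨T, hT, hafs⟩ := hN.exists_isTransversal_isAccurateFoundationSet hlc hlcm u
  obtain ⟨f, hfT, _, ⟨y, rfl⟩, ⟨z, hz⟩⟩ := hafs.1 b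
  have hcap : Cap s (t * f) :=
    ⟨_, mul_mem_rIdeal s (a' * y), ⟨z, by rw [← mul_assoc, hb, mul_assoc, hz, mul_assoc]⟩⟩
  obtain ⟨a, ha, c, -, hac⟩ :=
    hN.coreEquiv_of_cap hlc hlcm hcap (by rw [map_mul, hT.1 f hfT, hu])
  exact ⟨a, ha, f * c, by rw [hac, mul_assoc]⟩

end IsGenScale

/-- If `s ⩓ t` and `N t` divides `N s` within `N(S)`, then `sS ∩ tS = saS` for some core `a`. -/
theorem lcm_in_core (S : Type*) [Monoid S] (hlc : LeftCanc S) (hlcm : IsRightLCM S)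
    (N : S →* ℕ) (hN : IsGenScale N) (s t : S) (hst : Cap s t)
    (hdvd : ∃ u : S, N s = N t * N u) :
    ∃ a ∈ core S, rIdeal s ∩ rIdeal t = rIdeal (s * a) := by
  obtain ⟨u, hu⟩ := hdvd
  obtain ⟨r, hr⟩ := hlcm s t hst
  obtain ⟨⟨a', rfl⟩, -⟩ : r ∈ rIdeal s ∩ rIdeal t := hr ▸ mem_rIdeal_self r
  obtain ⟨a, ha, hat⟩ := hN.exists_core_mul_mem_rIdeal hlc hlcm hst hu
  obtain ⟨w, hw⟩ : s * a ∈ rIdeal (s * a') := hr ▸ ⟨mul_mem_rIdeal s a, hat⟩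
  have haw : a = a' * w := hlc s _ _ (by rw [hw, mul_assoc])
  exact ⟨a', mem_core_of_mul_mem_core (haw ▸ ha), hr⟩
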